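/- Let u ∈ ℝ^n be nonconstant, let t* ∈ ℝ be a minimizer of t ↦ RCC({i : u_i > t}, {i : u_i ≤ t}) over all t for which {i : u_i > t} is nonempty and proper, set C*_u = {i : u_i > t*}, and let C be whichever of C*_u and its complement has smaller cardinality (so |C| ≤ |C̄|). If f ∈ ℝ^n, f ≠ 0, has 0 as a median (0 minimizes c ↦ Σ_i |f_i − c|) and satisfies F₁(f) ≤ F₁(1_C), then the best threshold cut of f is at least as good as that of u: min over t with {i : f_i > t} nonempty proper of RCC({i : f_i > t}, {i : f_i ≤ t}) ≤ RCC(C*_u, C̄*_u). -/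

import Mathlib

/-! Co-area argument. By the median condition, for `t ≥ 0` the superlevel set `{f > t}` is the
smaller side of its partition and for `t < 0` its complement is, so the smaller side has at least
`tailCard f t` elements, where `∫ tailCard f = ‖f‖₁`; on the other hand `∫ cut({f > t}) dt = TV(f)`.
If `ρ` is the best ratio cut among the superlevel sets of `f`, integrating
`ρ · tailCard f t ≤ cut({f > t})` gives `ρ ≤ F₁(f) ≤ F₁(1_C)`, and `F₁(1_C) = RCC(C*_u)` because
`C` is the smaller side of `C*_u`. -/

open Finset

/-- Total variation `TV(f) = ½ Σ_{i,j} w_ij |f_i − f_j|`. -/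
noncomputable def TV {n : ℕ} (W : Fin n → Fin n → ℝ) (f : Fin n → ℝ) : ℝ :=
  (1 / 2) * ∑ i, ∑ j, W i j * |f i - f j|

/-- `F₁(f) = TV(f) / ‖f‖₁`. -/
noncomputable def F1 {n : ℕ} (W : Fin n → Fin n → ℝ) (f : Fin n → ℝ) : ℝ :=
  TV W f / ∑ i, |f i|

/-- Ratio Cheeger cut of the partition `(C, Cᶜ)`. -/
noncomputable def RCC {n : ℕ} (W : Fin n → Fin n → ℝ) (C : Finset (Fin n)) : ℝ :=
  (∑ i ∈ C, ∑ j ∈ Cᶜ, W i j) / min (C.card : ℝ) (Cᶜ.card : ℝ)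

open MeasureTheory

lemma integrable_indicator_Ico (a b c : ℝ) : Integrable ((Set.Ico a b).indicator fun _ => c) :=
  (integrable_indicator_iff measurableSet_Ico).2 (integrableOn_const measure_Ico_lt_top.ne)

lemma integral_indicator_Ico (a b c : ℝ) :
    ∫ t, (Set.Ico a b).indicator (fun _ => c) t = max (b - a) 0 * c := by
  rw [integral_indicator_const c measurableSet_Ico, Real.volume_real_Ico, smul_eq_mul]

section Superlevel

variable {ι : Type*} [Fintype ι]

noncomputable def superlevel (f : ι → ℝ) (t : ℝ) : Finset ι := univ.filter fun i => t < f i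

lemma mem_superlevel {f : ι → ℝ} {t : ℝ} {i : ι} : i ∈ superlevel f t ↔ t < f i := by
  simp [superlevel]

lemma exists_superlevel_nonempty_ne_univ {f : ι → ℝ} {i j : ι} (h : f j < f i) :
    ∃ t, (superlevel f t).Nonempty ∧ superlevel f t ≠ univ :=
  ⟨f j, ⟨i, mem_superlevel.2 h⟩,
    fun hu => lt_irrefl (f j) (mem_superlevel.1 (hu ▸ mem_univ j))⟩

lemma exists_lt_of_ne_zero_of_median {f : ι → ℝ} (hf : f ≠ 0)
    (hmed : ∀ c : ℝ, ∑ i, |f i| ≤ ∑ i, |f i - c|) : ∃ i j, f j < f i := by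
  by_contra! hconst
  obtain ⟨k, hk⟩ := Function.ne_iff.1 hf
  have hzero : ∑ i, |f i - f k| = 0 :=
    sum_eq_zero fun i _ => by rw [le_antisymm (hconst i k) (hconst k i), sub_self, abs_zero]
  have := (sum_eq_zero_iff_of_nonneg fun i _ => abs_nonneg (f i)).1
    (le_antisymm (hzero ▸ hmed (f k)) (sum_nonneg fun i _ => abs_nonneg _)) k (mem_univ k)
  exact hk (abs_eq_zero.1 this)

lemma exists_min_image_superlevel (f : ι → ℝ) (p : Finset ι → Prop)
    (φ : Finset ι → ℝ) (h : ∃ t, p (superlevel f t)) :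
    ∃ t, p (superlevel f t) ∧
      ∀ s, p (superlevel f s) → φ (superlevel f t) ≤ φ (superlevel f s) := by
  obtain ⟨_, ⟨t, ht, rfl⟩, hmin⟩ :=
    Set.exists_min_image (superlevel f '' {t | p (superlevel f t)}) φ (Set.toFinite _)
      (Set.Nonempty.image _ h)
  exact ⟨t, ht, fun s hs => hmin _ ⟨s, hs, rfl⟩⟩

variable [DecidableEq ι]

lemma compl_superlevel (f : ι → ℝ) (t : ℝ) :
    (superlevel f t)ᶜ = univ.filter fun i => f i ≤ t := by
  ext i; simp [superlevel]

/-- Moving the center from `0` to the smallest positive entry `c` lowers each positive term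
of `∑ |f i - c|` by `c` and raises each other term by at most `c`. -/
lemma card_superlevel_zero_le_card_compl {f : ι → ℝ}
    (hmed : ∀ c : ℝ, ∑ i, |f i| ≤ ∑ i, |f i - c|) :
    #(superlevel f 0) ≤ #(superlevel f 0)ᶜ := by
  set P := superlevel f 0
  rcases P.eq_empty_or_nonempty with hP | hP
  · simp [hP]
  obtain ⟨k, hkP, hk⟩ := P.exists_min_image f hP
  set c := f k
  have hc : 0 < c := mem_superlevel.1 hkP
  have hle : ∑ i, |f i - c| ≤ ∑ i ∈ P, (|f i| - c) + ∑ i ∈ Pᶜ, (|f i| + c) := by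
    rw [← sum_add_sum_compl P]
    gcongr with i hi i
    · rw [abs_of_nonneg (sub_nonneg.2 (hk i hi)), abs_of_pos (mem_superlevel.1 hi)]
    · simpa [abs_of_pos hc] using abs_sub (f i) c
  have := (hmed c).trans hle
  rw [sum_sub_distrib, sum_add_distrib, ← sum_add_sum_compl P fun i => |f i|] at this
  simp only [sum_const, nsmul_eq_mul] at this
  exact_mod_cast le_of_mul_le_mul_right (by linarith : (#P : ℝ) * c ≤ #Pᶜ * c) hc

lemma card_superlevel_le_card_compl {f : ι → ℝ}
    (hmed : ∀ c : ℝ, ∑ i, |f i| ≤ ∑ i, |f i - c|) {t : ℝ} (ht : 0 ≤ t) :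
    #(superlevel f t) ≤ #(superlevel f t)ᶜ := by
  have hsub : superlevel f t ⊆ superlevel f 0 := fun i hi =>
    mem_superlevel.2 (ht.trans_lt (mem_superlevel.1 hi))
  calc #(superlevel f t) ≤ #(superlevel f 0) := card_le_card hsub
    _ ≤ #(superlevel f 0)ᶜ := card_superlevel_zero_le_card_compl hmed
    _ ≤ #(superlevel f t)ᶜ := card_le_card (compl_subset_compl.2 hsub)

lemma card_compl_superlevel_le_card {f : ι → ℝ}
    (hmed : ∀ c : ℝ, ∑ i, |f i| ≤ ∑ i, |f i - c|) {t : ℝ} (ht : t < 0) :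
    #(superlevel f t)ᶜ ≤ #(superlevel f t) := by
  have hmed' : ∀ c : ℝ, ∑ i, |(-f) i| ≤ ∑ i, |(-f) i - c| := fun c => by
    simp only [Pi.neg_apply, abs_neg]
    refine (hmed (-c)).trans_eq (sum_congr rfl fun i _ => ?_)
    rw [← abs_neg]; ring_nf
  have hsub : (superlevel f t)ᶜ ⊆ superlevel (-f) 0 := fun i hi => by
    rw [mem_compl, mem_superlevel, not_lt] at hi
    exact mem_superlevel.2 (by simp; linarith)
  have hsub' : (superlevel (-f) 0)ᶜ ⊆ superlevel f t := fun i hi => by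
    rw [mem_compl, mem_superlevel, not_lt] at hi
    exact mem_superlevel.2 (by simp at hi; linarith)
  calc #(superlevel f t)ᶜ ≤ #(superlevel (-f) 0) := card_le_card hsub
    _ ≤ #(superlevel (-f) 0)ᶜ := card_superlevel_zero_le_card_compl hmed'
    _ ≤ #(superlevel f t) := card_le_card hsub'

noncomputable def tailCard (f : ι → ℝ) (t : ℝ) : ℝ :=
  if 0 ≤ t then #(superlevel f t) else #(superlevel f t)ᶜ

lemma tailCard_le_min {f : ι → ℝ} (hmed : ∀ c : ℝ, ∑ i, |f i| ≤ ∑ i, |f i - c|) (t : ℝ) :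
    tailCard f t ≤ min (#(superlevel f t) : ℝ) (#(superlevel f t)ᶜ : ℝ) := by
  unfold tailCard
  split_ifs with ht
  · exact le_min le_rfl (by exact_mod_cast card_superlevel_le_card_compl hmed ht)
  · exact le_min (by exact_mod_cast card_compl_superlevel_le_card hmed (not_le.1 ht)) le_rfl

lemma tailCard_eq_sum_indicator (f : ι → ℝ) (t : ℝ) :
    tailCard f t = ∑ i, ((Set.Ico 0 (f i)).indicator (fun _ => 1) t +
      (Set.Ico (f i) 0).indicator (fun _ => 1) t) := by
  unfold tailCard
  split_ifs with ht
  · rw [superlevel, natCast_card_filter]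
    refine sum_congr rfl fun i _ => ?_
    by_cases hi : t < f i <;> simp [hi, ht]
  · rw [compl_superlevel, natCast_card_filter]
    refine sum_congr rfl fun i _ => ?_
    by_cases hi : f i ≤ t <;> simp [Set.indicator_apply, hi, ht]

def cut (W : ι → ι → ℝ) (A : Finset ι) : ℝ := ∑ i ∈ A, ∑ j ∈ Aᶜ, W i j

lemma cut_superlevel_eq_sum_indicator (W : ι → ι → ℝ) (f : ι → ℝ) (t : ℝ) :
    cut W (superlevel f t) = ∑ i, ∑ j, (Set.Ico (f j) (f i)).indicator (fun _ => W i j) t := by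
  rw [cut, compl_superlevel, superlevel, sum_filter]
  refine sum_congr rfl fun i _ => ?_
  rw [sum_filter]
  split_ifs with hi
  · exact sum_congr rfl fun j _ => by by_cases hj : f j ≤ t <;> simp [hi, hj]
  · exact (sum_eq_zero fun j _ => by simp [hi]).symm

lemma cut_nonneg {W : ι → ι → ℝ} (hnonneg : ∀ i j, 0 ≤ W i j) (A : Finset ι) : 0 ≤ cut W A :=
  sum_nonneg fun i _ => sum_nonneg fun j _ => hnonneg i j

lemma cut_compl {W : ι → ι → ℝ} (hsym : ∀ i j, W i j = W j i) (A : Finset ι) :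
    cut W Aᶜ = cut W A := by
  rw [cut, cut, compl_compl, sum_comm]
  simp_rw [hsym]

lemma integrable_cut_superlevel (W : ι → ι → ℝ) (f : ι → ℝ) :
    Integrable fun t => cut W (superlevel f t) := by
  simp_rw [cut_superlevel_eq_sum_indicator]
  exact integrable_finsetSum _ fun i _ =>
    integrable_finsetSum _ fun j _ => integrable_indicator_Ico _ _ _

lemma integrable_tailCard (f : ι → ℝ) : Integrable (tailCard f) := by
  simp_rw [funext (tailCard_eq_sum_indicator f)]
  exact integrable_finsetSum _ fun i _ =>
    (integrable_indicator_Ico _ _ _).add (integrable_indicator_Ico _ _ _)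

lemma integral_tailCard (f : ι → ℝ) : ∫ t, tailCard f t = ∑ i, |f i| := by
  simp_rw [tailCard_eq_sum_indicator]
  rw [integral_finsetSum]
  swap
  · exact fun i _ => (integrable_indicator_Ico _ _ _).add (integrable_indicator_Ico _ _ _)
  refine sum_congr rfl fun i _ => ?_
  rw [integral_add (integrable_indicator_Ico _ _ _) (integrable_indicator_Ico _ _ _)]
  rw [integral_indicator_Ico, integral_indicator_Ico, mul_one, mul_one, sub_zero, zero_sub,
    max_zero_add_max_neg_zero_eq_abs_self]

end Superlevel

section Graph

variable {n : ℕ} {W : Fin n → Fin n → ℝ}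

lemma integral_cut_superlevel (hsym : ∀ i j, W i j = W j i) (f : Fin n → ℝ) :
    ∫ t, cut W (superlevel f t) = TV W f := by
  simp_rw [cut_superlevel_eq_sum_indicator]
  rw [integral_finsetSum _ fun i _ =>
    integrable_finsetSum _ fun j _ => integrable_indicator_Ico _ _ _]
  simp_rw [integral_finsetSum _ fun j _ => integrable_indicator_Ico _ _ _, integral_indicator_Ico]
  have hswap : ∑ i, ∑ j, max (f j - f i) 0 * W i j = ∑ i, ∑ j, max (f i - f j) 0 * W i j := by
    rw [sum_comm]; simp_rw [hsym]
  have habs : ∀ i j,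
      W i j * |f i - f j| = max (f i - f j) 0 * W i j + max (f j - f i) 0 * W i j :=
    fun i j => by rw [← max_zero_add_max_neg_zero_eq_abs_self, neg_sub]; ring
  simp_rw [TV, habs, sum_add_distrib, hswap]
  ring

lemma RCC_eq_cut_div (A : Finset (Fin n)) :
    RCC W A = cut W A / min (#A : ℝ) (#Aᶜ : ℝ) := rfl

lemma RCC_nonneg (hnonneg : ∀ i j, 0 ≤ W i j) (A : Finset (Fin n)) : 0 ≤ RCC W A :=
  div_nonneg (cut_nonneg hnonneg A) (by positivity)

lemma mul_min_card_le_cut (hnonneg : ∀ i j, 0 ≤ W i j) {A : Finset (Fin n)} {ρ : ℝ}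
    (hρ : A.Nonempty → A ≠ univ → ρ ≤ RCC W A) : ρ * min (#A : ℝ) (#Aᶜ : ℝ) ≤ cut W A := by
  by_cases hA : A.Nonempty ∧ A ≠ univ
  · have hmin : (0 : ℝ) < min (#A : ℝ) (#Aᶜ : ℝ) := by
      simpa [card_pos, hA.1, nonempty_iff_ne_empty] using hA.2
    rw [← le_div_iff₀ hmin]
    exact hρ hA.1 hA.2
  · rw [not_and_or, not_nonempty_iff_eq_empty, not_ne_iff] at hA
    rcases hA with rfl | rfl <;> simp [cut_nonneg hnonneg]

lemma mul_norm_le_TV (hsym : ∀ i j, W i j = W j i) (hnonneg : ∀ i j, 0 ≤ W i j)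
    {f : Fin n → ℝ} (hmed : ∀ c : ℝ, ∑ i, |f i| ≤ ∑ i, |f i - c|) {ρ : ℝ} (hρ : 0 ≤ ρ)
    (hle : ∀ t, (superlevel f t).Nonempty → superlevel f t ≠ univ →
      ρ ≤ RCC W (superlevel f t)) :
    ρ * ∑ i, |f i| ≤ TV W f :=
  calc ρ * ∑ i, |f i| = ∫ t, ρ * tailCard f t := by rw [integral_const_mul, integral_tailCard]
    _ ≤ ∫ t, cut W (superlevel f t) :=
      integral_mono ((integrable_tailCard f).const_mul ρ) (integrable_cut_superlevel W f)
        fun t => (mul_le_mul_of_nonneg_left (tailCard_le_min hmed t) hρ).trans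
          (mul_min_card_le_cut hnonneg (hle t))
    _ = TV W f := integral_cut_superlevel hsym f

lemma exists_superlevel_RCC_le_F1 (hsym : ∀ i j, W i j = W j i)
    (hnonneg : ∀ i j, 0 ≤ W i j) {f : Fin n → ℝ} (hf : f ≠ 0)
    (hmed : ∀ c : ℝ, ∑ i, |f i| ≤ ∑ i, |f i - c|) :
    ∃ t, (superlevel f t).Nonempty ∧ superlevel f t ≠ univ ∧
      RCC W (superlevel f t) ≤ F1 W f := by
  obtain ⟨i, j, hij⟩ := exists_lt_of_ne_zero_of_median hf hmed
  obtain ⟨t, ⟨hne, hne'⟩, hmin⟩ := exists_min_image_superlevel f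
    (fun A => A.Nonempty ∧ A ≠ univ) (RCC W) (exists_superlevel_nonempty_ne_univ hij)
  have hnorm : 0 < ∑ i, |f i| := by
    obtain ⟨k, hk⟩ := Function.ne_iff.1 hf
    exact sum_pos' (fun i _ => abs_nonneg _) ⟨k, mem_univ k, abs_pos.2 hk⟩
  refine ⟨t, hne, hne', ?_⟩
  rw [F1, le_div_iff₀ hnorm]
  exact mul_norm_le_TV hsym hnonneg hmed (RCC_nonneg hnonneg _) fun s h h' => hmin s ⟨h, h'⟩

lemma RCC_compl (hsym : ∀ i j, W i j = W j i) (A : Finset (Fin n)) : RCC W Aᶜ = RCC W A := by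
  rw [RCC_eq_cut_div, RCC_eq_cut_div, cut_compl hsym, compl_compl, min_comm]

lemma TV_indicator (hsym : ∀ i j, W i j = W j i) (A : Finset (Fin n)) :
    TV W (fun i => if i ∈ A then 1 else 0) = cut W A := by
  have hrow : ∀ i, ∑ j, W i j * |(if i ∈ A then (1 : ℝ) else 0) - if j ∈ A then 1 else 0| =
      if i ∈ A then ∑ j ∈ Aᶜ, W i j else ∑ j ∈ A, W i j := by
    intro i
    rw [← sum_add_sum_compl A]
    split_ifs
    · rw [sum_eq_zero (s := A) fun j hj => by simp, zero_add]
      exact sum_congr rfl fun j hj => by simp [mem_compl.1 hj]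
    · rw [sum_eq_zero (s := Aᶜ) fun j hj => by simp [mem_compl.1 hj], add_zero]
      exact sum_congr rfl fun j hj => by simp
  have hsplit : ∑ i, (if i ∈ A then ∑ j ∈ Aᶜ, W i j else ∑ j ∈ A, W i j) =
      cut W A + cut W Aᶜ := by
    rw [← sum_add_sum_compl A]
    congr 1 <;> refine sum_congr rfl fun i hi => ?_ <;> simp_all
  rw [TV, sum_congr rfl fun i _ => hrow i, hsplit, cut_compl hsym]
  ring

lemma F1_indicator_eq_RCC (hsym : ∀ i j, W i j = W j i) {A : Finset (Fin n)}
    (hA : #A ≤ #Aᶜ) : F1 W (fun i => if i ∈ A then 1 else 0) = RCC W A := by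
  rw [F1, TV_indicator hsym, RCC_eq_cut_div, min_eq_left (by exact_mod_cast hA)]
  congr 1
  simp [apply_ite]

end Graph

theorem quality_guarantee_general (n : ℕ)
    (W : Fin n → Fin n → ℝ)
    (hsym : ∀ i j, W i j = W j i) (hnonneg : ∀ i j, 0 ≤ W i j)
    (u : Fin n → ℝ)
    (tstar : ℝ)
    (C : Finset (Fin n))
    (hC : C = if (Finset.univ.filter (fun i => tstar < u i)).card ≤
        ((Finset.univ.filter (fun i => tstar < u i))ᶜ).card
      then Finset.univ.filter (fun i => tstar < u i)
      else (Finset.univ.filter (fun i => tstar < u i))ᶜ)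
    (f : Fin n → ℝ) (hf : f ≠ 0)
    (hmed : ∀ c : ℝ, ∑ i, |f i| ≤ ∑ i, |f i - c|)
    (hF : F1 W f ≤ F1 W (fun i => if i ∈ C then (1 : ℝ) else 0)) :
    ∃ t : ℝ, (Finset.univ.filter (fun i => t < f i)).Nonempty ∧
      Finset.univ.filter (fun i => t < f i) ≠ Finset.univ ∧
      RCC W (Finset.univ.filter (fun i => t < f i)) ≤
        RCC W (Finset.univ.filter (fun i => tstar < u i)) := by
  obtain ⟨t, hne, hne', ht⟩ := exists_superlevel_RCC_le_F1 hsym hnonneg hf hmed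
  refine ⟨t, hne, hne', ht.trans (hF.trans_eq ?_)⟩
  split_ifs at hC with hcard <;> subst hC
  · exact F1_indicator_eq_RCC hsym hcard
  · rw [F1_indicator_eq_RCC hsym (by rw [compl_compl]; omega), RCC_compl hsym]

/-- Quality guarantee: let `C*_u` be the best threshold set of a nonconstant vector `u`
and `C` the smaller of `C*_u` and its complement. If `f ≠ 0` has median `0` and
`F₁(f) ≤ F₁(1_C)`, then the best threshold cut of `f` is at least as good as that
of `u`. -/
theorem quality_guarantee (n : ℕ) (hn : 2 ≤ n)
    (W : Fin n → Fin n → ℝ)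
    (hsym : ∀ i j, W i j = W j i) (hnonneg : ∀ i j, 0 ≤ W i j)
    (u : Fin n → ℝ) (hu : ¬ ∃ c : ℝ, ∀ i, u i = c)
    (tstar : ℝ)
    (hts : (Finset.univ.filter (fun i => tstar < u i)).Nonempty ∧
      Finset.univ.filter (fun i => tstar < u i) ≠ Finset.univ)
    (htsmin : ∀ t : ℝ, (Finset.univ.filter (fun i => t < u i)).Nonempty →
      Finset.univ.filter (fun i => t < u i) ≠ Finset.univ →
      RCC W (Finset.univ.filter (fun i => tstar < u i)) ≤
        RCC W (Finset.univ.filter (fun i => t < u i)))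
    (C : Finset (Fin n))
    (hC : C = if (Finset.univ.filter (fun i => tstar < u i)).card ≤
        ((Finset.univ.filter (fun i => tstar < u i))ᶜ).card
      then Finset.univ.filter (fun i => tstar < u i)
      else (Finset.univ.filter (fun i => tstar < u i))ᶜ)
    (f : Fin n → ℝ) (hf : f ≠ 0)
    (hmed : ∀ c : ℝ, ∑ i, |f i| ≤ ∑ i, |f i - c|)
    (hF : F1 W f ≤ F1 W (fun i => if i ∈ C then (1 : ℝ) else 0)) :
    ∃ t : ℝ, (Finset.univ.filter (fun i => t < f i)).Nonempty ∧
      Finset.univ.filter (fun i => t < f i) ≠ Finset.univ ∧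
      RCC W (Finset.univ.filter (fun i => t < f i)) ≤
        RCC W (Finset.univ.filter (fun i => tstar < u i)) :=
  quality_guarantee_general n W hsym hnonneg u tstar C hC f hf hmed hF
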